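/- arXiv:2111.04600 — 2 statements merged into one kernel-verified Lean document; each statement's English description precedes it below -/
import Mathlib

section
/- Let α ∈ ℝ[t] be a nonzero real polynomial, let A ∈ ℍ[t] be a nonzero quaternion polynomial, and let B ∈ ℍ[t] be arbitrary. Set P = αA and D = BA. Then the dual quaternion polynomial C = P + εD satisfies the Study condition P·D̄ + D·P̄ = 0 if and only if B is vectorial, i.e. B + B̄ = 0. -/
open Polynomial

noncomputable section

/-- The quaternion unit `i`. -/
def qi : Quaternion ℝ := ⟨0, 1, 0, 0⟩

/-- Embedding of real polynomials into quaternion polynomials (scalar coefficients). -/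
def toQ : Polynomial ℝ →+* Polynomial (Quaternion ℝ) :=
  mapRingHom (algebraMap ℝ (Quaternion ℝ))

/-- Coefficientwise quaternion conjugation of a quaternion polynomial. -/
def pconj (p : Polynomial (Quaternion ℝ)) : Polynomial (Quaternion ℝ) :=
  p.sum fun n a => monomial n (star a)

/-!
Conjugation reverses products and fixes real polynomials, so
`P·D̄ + D·P̄ = α·A·Ā·B̄ + B·A·Ā·α`. Both `α` and the norm polynomial `A·Ā` have real
coefficients, hence are central, and the expression factors as `α·(A·Ā)·(B + B̄)`.
Since `ℍ[t]` has no zero divisors and `α·(A·Ā) ≠ 0`, it vanishes exactly when `B + B̄ = 0`.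
-/

theorem Polynomial.commute_of_forall_coeff_commute {R : Type*} [Semiring R] {p q : R[X]}
    (h : ∀ m n, Commute (p.coeff m) (q.coeff n)) : Commute p q := by
  ext n
  rw [coeff_mul, coeff_mul, ← Finset.Nat.sum_antidiagonal_swap]
  exact Finset.sum_congr rfl fun x _ => h x.2 x.1

@[simp]
theorem coeff_pconj (p : Polynomial (Quaternion ℝ)) (n : ℕ) :
    (pconj p).coeff n = star (p.coeff n) := by
  rw [pconj, Polynomial.sum_def, finsetSum_coeff]
  simp only [coeff_monomial, Finset.sum_ite_eq', mem_support_iff]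
  split_ifs with h
  · rfl
  · rw [notMem_support_iff.mp h, star_zero]

theorem pconj_pconj (p : Polynomial (Quaternion ℝ)) : pconj (pconj p) = p := by
  ext n : 1
  simp

theorem pconj_eq_zero_iff {p : Polynomial (Quaternion ℝ)} : pconj p = 0 ↔ p = 0 := by
  simp [Polynomial.ext_iff]

theorem pconj_mul (p q : Polynomial (Quaternion ℝ)) : pconj (p * q) = pconj q * pconj p := by
  ext n : 1
  rw [coeff_pconj, coeff_mul, coeff_mul, star_sum, ← Finset.Nat.sum_antidiagonal_swap]
  simp

theorem pconj_toQ (α : Polynomial ℝ) : pconj (toQ α) = toQ α := by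
  ext n : 1
  simp [toQ]

theorem commute_toQ (α : Polynomial ℝ) (p : Polynomial (Quaternion ℝ)) : Commute (toQ α) p :=
  commute_of_forall_coeff_commute fun m n => by
    simpa [toQ, Commute, SemiconjBy] using Quaternion.coe_commutes (α.coeff m) (p.coeff n)

theorem pconj_mul_pconj_self (A : Polynomial (Quaternion ℝ)) :
    pconj (A * pconj A) = A * pconj A := by
  rw [pconj_mul, pconj_pconj]

theorem commute_mul_pconj_self (A p : Polynomial (Quaternion ℝ)) : Commute (A * pconj A) p :=
  commute_of_forall_coeff_commute fun m n => by
    have hreal : (A * pconj A).coeff m = ((A * pconj A).coeff m).re := by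
      rw [← Quaternion.star_eq_self, ← coeff_pconj, pconj_mul_pconj_self]
    rw [hreal]
    exact Quaternion.coe_commutes _ _

theorem study_form_eq (α : Polynomial ℝ) (A B : Polynomial (Quaternion ℝ)) :
    toQ α * A * pconj (B * A) + B * A * pconj (toQ α * A) =
      toQ α * (A * pconj A) * (B + pconj B) := by
  rw [pconj_mul, pconj_mul, pconj_toQ, mul_add, add_comm]
  congr 1
  · calc B * A * (pconj A * toQ α) = B * (A * pconj A) * toQ α := by simp only [mul_assoc]
      _ = toQ α * (A * pconj A) * B := by
        rw [← (commute_mul_pconj_self A B).eq, ← (commute_toQ α _).eq]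
        simp only [mul_assoc]
  · simp only [mul_assoc]

/-- For nonzero `α ∈ ℝ[t]`, nonzero `A ∈ ℍ[t]` and arbitrary `B ∈ ℍ[t]`,
setting `P = αA` and `D = BA`, the dual quaternion polynomial `C = P + εD` satisfies the
Study condition `P·D̄ + D·P̄ = 0` if and only if `B` is vectorial, i.e. `B + B̄ = 0`. -/
theorem study_condition_iff_vectorial (α : Polynomial ℝ) (hα : α ≠ 0)
    (A : Polynomial (Quaternion ℝ)) (hA : A ≠ 0) (B : Polynomial (Quaternion ℝ)) :
    (toQ α * A) * pconj (B * A) + (B * A) * pconj (toQ α * A) = 0 ↔ B + pconj B = 0 := by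
  have hα' : toQ α ≠ 0 := (Polynomial.map_ne_zero_iff (algebraMap ℝ _).injective).mpr hα
  have hN : toQ α * (A * pconj A) ≠ 0 :=
    mul_ne_zero hα' (mul_ne_zero hA (pconj_eq_zero_iff.not.mpr hA))
  rw [study_form_eq, mul_eq_zero, or_iff_right hN]
end
end

section
/- Let α ∈ ℝ[t] be nonzero, let r₁, r₂, r₃ ∈ ℝ[t], and set b = −½(r₁·i + r₂·j + r₃·k) ∈ ℍ[t]. Let A ∈ ℍ[t] be nonzero and suppose the framing condition holds: (α·b′ − α′·b)·(A i Ā) = (A i Ā)·(α·b′ − α′·b). Then the rational curve r = (r₁/α, r₂/α, r₃/α) is a Pythagorean-hodograph curve: there exists σ ∈ RatFunc ℝ such that, in the field of real rational functions, ((r₁/α)′)² + ((r₂/α)′)² + ((r₃/α)′)² = σ², where ′ denotes the derivative of rational functions. -/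
/-
With the Wronskians `w_m = α r_m' - α' r_m` we have `(r_m / α)' = w_m / α²` and
`α b' - α' b = -½ (w₁ i + w₂ j + w₃ k)`, so the framing condition says that the pure quaternion
`w = w₁ i + w₂ j + w₃ k` commutes with `Q = A i Ā`. Read in `ℍ[ℝ[t]]`, `Q` is pure as well, and
two commuting pure quaternions have a real product: `star (w Q) = Q w = w Q`. Hence
`(w₁² + w₂² + w₃²) |Q|² = (w Q)²` with `|Q|² = (|A|²)²` and `|A|² ≠ 0`, which exhibits
`Σ ((r_m / α)')²` as the square of `(w Q) / (|A|² α²)`.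
-/

open Polynomial

noncomputable section

/-- The quaternion unit `j`. -/
def qj : Quaternion ℝ := ⟨0, 0, 1, 0⟩
/-- The quaternion unit `k`. -/
def qk : Quaternion ℝ := ⟨0, 0, 0, 1⟩

/-- The derivative of a real rational function, extending polynomial differentiation
(defined via the quotient rule on the canonical numerator and denominator). -/
def ratDeriv (f : RatFunc ℝ) : RatFunc ℝ :=
  (algebraMap (Polynomial ℝ) (RatFunc ℝ) (derivative f.num) *
      algebraMap (Polynomial ℝ) (RatFunc ℝ) f.denom -
    algebraMap (Polynomial ℝ) (RatFunc ℝ) f.num *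
      algebraMap (Polynomial ℝ) (RatFunc ℝ) (derivative f.denom)) /
  algebraMap (Polynomial ℝ) (RatFunc ℝ) (f.denom ^ 2)

open Quaternion

namespace Quaternion

variable {R S : Type*} [CommRing R] [CommRing S]

def mapRingHom (f : R →+* S) : ℍ[R] →+* ℍ[S] where
  toFun a := ⟨f a.re, f a.imI, f a.imJ, f a.imK⟩
  map_one' := by ext <;> simp
  map_mul' a b := by
    change (⟨_, _, _, _⟩ : ℍ[S]) = (⟨_, _, _, _⟩ : ℍ[S]) * (⟨_, _, _, _⟩ : ℍ[S])
    ext <;> simp [re_mul, imI_mul, imJ_mul, imK_mul] <;> ring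
  map_zero' := by ext <;> simp
  map_add' a b := by
    change (⟨_, _, _, _⟩ : ℍ[S]) = (⟨_, _, _, _⟩ : ℍ[S]) + (⟨_, _, _, _⟩ : ℍ[S])
    ext <;> simp

section mapRingHom

variable (f : R →+* S) (a : ℍ[R])

@[simp] lemma re_mapRingHom : (mapRingHom f a).re = f a.re := rfl
@[simp] lemma imI_mapRingHom : (mapRingHom f a).imI = f a.imI := rfl
@[simp] lemma imJ_mapRingHom : (mapRingHom f a).imJ = f a.imJ := rfl
@[simp] lemma imK_mapRingHom : (mapRingHom f a).imK = f a.imK := rfl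

lemma mapRingHom_star : mapRingHom f (star a) = star (mapRingHom f a) := by
  ext <;> simp

lemma normSq_mapRingHom : normSq (mapRingHom f a) = f (normSq a) := by
  simp [normSq_def']

lemma mapRingHom_coe (r : R) : mapRingHom f r = f r := by
  ext <;> simp

end mapRingHom

lemma normSq_mk_zero (x y z : R) : normSq (⟨0, x, y, z⟩ : ℍ[R]) = x ^ 2 + y ^ 2 + z ^ 2 :=
  (normSq_def' _).trans (by ring)

lemma star_mul_mul_star_of_star_eq_neg {u e : ℍ[R]} (he : star e = -e) :
    star (u * e * star u) = -(u * e * star u) := by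
  rw [star_mul, star_mul, star_star, he]
  noncomm_ring

lemma normSq_mul_mul_star (u e : ℍ[R]) : normSq (u * e * star u) = normSq u ^ 2 * normSq e := by
  rw [map_mul, map_mul, normSq_star]
  ring

theorem normSq_mul_normSq_of_commute [NoZeroDivisors R] [CharZero R] {x y : ℍ[R]}
    (hx : star x = -x) (hy : star y = -y) (hxy : Commute x y) :
    normSq x * normSq y = (x * y).re ^ 2 := by
  have hreal : star (x * y) = x * y := by rw [star_mul, hx, hy, neg_mul_neg, hxy.eq]
  rw [← map_mul, star_eq_self.mp hreal, normSq_coe, re_coe]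

lemma eq_zero_of_normSq_eq_zero {R : Type*} [CommRing R] [LinearOrder R] [IsStrictOrderedRing R]
    {u : ℍ[R[X]]} (h : normSq u = 0) : u = 0 := by
  have hev (t : R) : mapRingHom (evalRingHom t) u = 0 :=
    normSq_eq_zero.mp (by rw [normSq_mapRingHom, h, map_zero])
  ext : 1 <;> refine Polynomial.funext fun t => ?_
  · simpa using congrArg QuaternionAlgebra.re (hev t)
  · simpa using congrArg QuaternionAlgebra.imI (hev t)
  · simpa using congrArg QuaternionAlgebra.imJ (hev t)
  · simpa using congrArg QuaternionAlgebra.imK (hev t)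

end Quaternion

namespace Polynomial

variable {R : Type*} [CommRing R]

def toQuaternion : ℍ[R][X] →+* ℍ[R[X]] :=
  eval₂RingHom' (Quaternion.mapRingHom C) ((X : R[X]) : ℍ[R[X]]) fun _ => (coe_commute _ _).symm

lemma toQuaternion_C (a : ℍ[R]) : toQuaternion (C a) = Quaternion.mapRingHom C a :=
  eval₂_C _ _

lemma toQuaternion_monomial (n : ℕ) (a : ℍ[R]) :
    toQuaternion (monomial n a) = Quaternion.mapRingHom C a * ((X ^ n : R[X]) : ℍ[R[X]]) := by
  rw [Quaternion.coe_pow]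
  exact eval₂_monomial _ _

lemma toQuaternion_map_algebraMap (r : R[X]) :
    toQuaternion (r.map (algebraMap R ℍ[R])) = r := by
  induction r using Polynomial.induction_on' with
  | add p q hp hq => rw [Polynomial.map_add, map_add, hp, hq, ← Quaternion.coe_add]
  | monomial n a =>
    rw [map_monomial, toQuaternion_monomial, Quaternion.algebraMap_def, mapRingHom_coe,
      ← Quaternion.coe_mul, C_mul_X_pow_eq_monomial]

lemma coeff_toQuaternion (p : ℍ[R][X]) (n : ℕ) :
    (toQuaternion p).re.coeff n = (p.coeff n).re ∧ (toQuaternion p).imI.coeff n = (p.coeff n).imI ∧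
    (toQuaternion p).imJ.coeff n = (p.coeff n).imJ ∧
    (toQuaternion p).imK.coeff n = (p.coeff n).imK := by
  induction p using Polynomial.induction_on' with
  | add p q hp hq => simp [hp, hq]
  | monomial m a =>
    rw [toQuaternion_monomial, mul_coe_eq_smul]
    rcases eq_or_ne m n with rfl | h
    · simp
    · simp [coeff_monomial, h, h.symm]

lemma toQuaternion_injective : Function.Injective (toQuaternion : ℍ[R][X] → ℍ[R[X]]) := by
  refine (injective_iff_map_eq_zero _).mpr fun p hp => Polynomial.ext fun n => ?_
  obtain ⟨h₁, h₂, h₃, h₄⟩ := coeff_toQuaternion p n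
  simp only [hp] at h₁ h₂ h₃ h₄
  ext <;> simp [← h₁, ← h₂, ← h₃, ← h₄]

lemma toQuaternion_toQ (r : ℝ[X]) : toQuaternion (toQ r) = r :=
  toQuaternion_map_algebraMap r

end Polynomial

lemma pconj_add (p q : ℍ[ℝ][X]) : pconj (p + q) = pconj p + pconj q :=
  sum_add_index _ _ _ (by simp) (by simp)

lemma pconj_monomial (n : ℕ) (a : ℍ[ℝ]) : pconj (monomial n a) = monomial n (star a) :=
  sum_monomial_index _ _ (by simp)

lemma toQuaternion_pconj (p : ℍ[ℝ][X]) : toQuaternion (pconj p) = star (toQuaternion p) := by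
  induction p using Polynomial.induction_on' with
  | add p q hp hq =>
    rw [pconj_add, map_add, map_add, hp, hq]
    ext : 1 <;> simp [add_comm]
  | monomial n a =>
    rw [pconj_monomial, toQuaternion_monomial, toQuaternion_monomial, star_mul, star_coe,
      mapRingHom_star, (coe_commute _ _).eq]

section RatFunc

local notation "F" => algebraMap ℝ[X] (RatFunc ℝ)

lemma ratDeriv_div (p q : ℝ[X]) (hq : q ≠ 0) :
    ratDeriv (F p / F q) = F (wronskian q p) / F q ^ 2 := by
  set f := F p / F q
  have hFq : F q ≠ 0 := RatFunc.algebraMap_ne_zero hq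
  have hFd : F f.denom ≠ 0 := RatFunc.algebraMap_ne_zero f.denom_ne_zero
  have hcross : f.num * q = p * f.denom := by
    apply RatFunc.algebraMap_injective
    rw [map_mul, map_mul, ← div_eq_div_iff hFd hFq, RatFunc.num_div_denom]
  have hcross' : derivative f.num * q + f.num * derivative q
      = derivative p * f.denom + p * derivative f.denom := by
    simpa [derivative_mul] using congrArg derivative hcross
  rw [ratDeriv, map_pow, div_eq_div_iff (pow_ne_zero 2 hFd) (pow_ne_zero 2 hFq), wronskian]
  simp only [← map_mul, ← map_sub, ← map_pow]
  congr 1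
  linear_combination (q * f.denom) * hcross'
    - (derivative f.denom * q + derivative q * f.denom) * hcross

lemma sum_sq_ratDeriv_div_eq_sq {α n s : ℝ[X]} (r₁ r₂ r₃ : ℝ[X]) (hα : α ≠ 0) (hn : n ≠ 0)
    (h : (wronskian α r₁ ^ 2 + wronskian α r₂ ^ 2 + wronskian α r₃ ^ 2) * n ^ 2 = s ^ 2) :
    ratDeriv (F r₁ / F α) ^ 2 + ratDeriv (F r₂ / F α) ^ 2 + ratDeriv (F r₃ / F α) ^ 2
      = (F s / (F n * F α ^ 2)) ^ 2 := by
  have hFα : F α ≠ 0 := RatFunc.algebraMap_ne_zero hα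
  have hFn : F n ≠ 0 := RatFunc.algebraMap_ne_zero hn
  have hF := congrArg F h
  simp only [map_add, map_mul, map_pow] at hF
  rw [ratDeriv_div _ _ hα, ratDeriv_div _ _ hα, ratDeriv_div _ _ hα]
  field_simp
  linear_combination hF

end RatFunc

def pureQuatPoly (x y z : ℝ[X]) : ℍ[ℝ][X] :=
  toQ x * C qi + toQ y * C qj + toQ z * C qk

lemma toQ_mul_derivative_sub_pureQuatPoly (α x y z : ℝ[X]) :
    toQ α * derivative (pureQuatPoly x y z) - toQ (derivative α) * pureQuatPoly x y z
      = pureQuatPoly (wronskian α x) (wronskian α y) (wronskian α z) := by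
  have hder (r : ℝ[X]) : derivative (toQ r) = toQ (derivative r) := derivative_map r _
  simp only [pureQuatPoly, wronskian, derivative_add, derivative_mul, derivative_C, mul_zero,
    add_zero, hder, map_sub, map_mul]
  noncomm_ring

lemma toQuaternion_pureQuatPoly (x y z : ℝ[X]) :
    toQuaternion (pureQuatPoly x y z) = ⟨0, x, y, z⟩ := by
  simp only [pureQuatPoly, map_add, map_mul, toQuaternion_C, toQuaternion_toQ]
  ext <;> simp <;> simp [qi, qj, qk]

lemma star_qi : star qi = -qi := star_eq_neg.mpr rfl

lemma normSq_qi : normSq qi = 1 := by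
  rw [normSq_def']
  simp [qi]

/-- If `C = (α + εb)A` with `b = −½(r₁i + r₂j + r₃k)` is a framing motion,
i.e. `α·b′ − α′·b` commutes with `A i Ā`, then `r = (r₁/α, r₂/α, r₃/α)` is a
Pythagorean-hodograph curve: the sum of squares of the derivatives of its components is the
square of a rational function. -/
theorem framing_implies_PH (α r₁ r₂ r₃ : Polynomial ℝ) (hα : α ≠ 0)
    (A : Polynomial (Quaternion ℝ)) (hA : A ≠ 0)
    (b : Polynomial (Quaternion ℝ))
    (hbdef : b = (-(2⁻¹ : ℝ)) •
      (toQ r₁ * Polynomial.C qi + toQ r₂ * Polynomial.C qj + toQ r₃ * Polynomial.C qk))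
    (hframe : (toQ α * derivative b - toQ (derivative α) * b) * (A * Polynomial.C qi * pconj A)
        = (A * Polynomial.C qi * pconj A) * (toQ α * derivative b - toQ (derivative α) * b)) :
    ∃ σ : RatFunc ℝ,
      ratDeriv (algebraMap (Polynomial ℝ) (RatFunc ℝ) r₁ /
          algebraMap (Polynomial ℝ) (RatFunc ℝ) α) ^ 2 +
      ratDeriv (algebraMap (Polynomial ℝ) (RatFunc ℝ) r₂ /
          algebraMap (Polynomial ℝ) (RatFunc ℝ) α) ^ 2 +
      ratDeriv (algebraMap (Polynomial ℝ) (RatFunc ℝ) r₃ /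
          algebraMap (Polynomial ℝ) (RatFunc ℝ) α) ^ 2 = σ ^ 2 := by
  set W := pureQuatPoly (wronskian α r₁) (wronskian α r₂) (wronskian α r₃)
  have hW : toQ α * derivative b - toQ (derivative α) * b = (-(2⁻¹ : ℝ)) • W := by
    rw [hbdef, derivative_smul, mul_smul_comm, mul_smul_comm, ← smul_sub]
    exact congrArg _ (toQ_mul_derivative_sub_pureQuatPoly α r₁ r₂ r₃)
  have hcomm : Commute W (A * C qi * pconj A) := by
    rw [hW, smul_mul_assoc, mul_smul_comm] at hframe
    exact smul_right_injective _ (by norm_num) hframe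
  set u := toQuaternion A
  have hu : normSq u ≠ 0 :=
    mt Quaternion.eq_zero_of_normSq_eq_zero ((map_ne_zero_iff _ toQuaternion_injective).mpr hA)
  have he : star (Quaternion.mapRingHom C qi) = -Quaternion.mapRingHom C qi := by
    rw [← mapRingHom_star, star_qi, map_neg]
  have hcommQ : Commute (⟨0, wronskian α r₁, wronskian α r₂, wronskian α r₃⟩ : ℍ[ℝ[X]])
      (u * Quaternion.mapRingHom C qi * star u) := by
    have := hcomm.map toQuaternion
    rwa [map_mul, map_mul, toQuaternion_C, toQuaternion_pconj, toQuaternion_pureQuatPoly] at this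
  have key := normSq_mul_normSq_of_commute (star_eq_neg.mpr rfl)
    (star_mul_mul_star_of_star_eq_neg he) hcommQ
  rw [normSq_mul_mul_star, normSq_mapRingHom, normSq_qi, map_one, mul_one, normSq_mk_zero] at key
  exact ⟨_, sum_sq_ratDeriv_div_eq_sq r₁ r₂ r₃ hα hu key⟩
end
end
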